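/- arXiv:1510.05076 — 5 statements merged into one kernel-verified Lean document; each statement's English description precedes it below -/
import Mathlib

section
/- Let k be a field, p a nonzero Laurent polynomial over k of 'degree span' d (the difference between the largest and smallest exponents with nonzero coefficient). Then the kernel of the shift operator θ(p) acting on k^ℤ is a k-vector space of dimension d; in particular a trajectory in the kernel is determined by its values on any d consecutive time points. -/
/-!
Let `m` and `m + d` be the extreme exponents of `p`. Since `p.coeff m ≠ 0`, the equation
`θ(p) w = 0` at time `s + m` solves for `w s` in terms of `w (s - 1), …, w (s - d)`; since
`p.coeff (m + d) ≠ 0`, the same equation solves for its lowest value in terms of the `d` values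
above it. So a kernel trajectory vanishing on `d` consecutive times vanishes everywhere, and any
values on such a window extend to a kernel trajectory, first forwards and then backwards. Each
backward statement is the forward one for `invert p`, because `θ(invert p)` is `θ(p)` with
time reversed. Evaluation on the window `[0, d)` is therefore an isomorphism onto `k^d`.
-/

/-- The shift operator induced by a Laurent polynomial `p = Σ aᵢ sⁱ` on biinfinite
sequences, as a `k`-linear map: `(θ p w) t = Σ aᵢ w (t - i)`. -/
noncomputable def theta {k : Type*} [Field k]
    (p : LaurentPolynomial k) : (ℤ → k) →ₗ[k] (ℤ → k) where
  toFun w t := Finsupp.sum p.coeff fun i a => a * w (t - i)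
  map_add' w v := by
    funext t
    simp [Finsupp.sum, mul_add, Finset.sum_add_distrib]
  map_smul' c w := by
    funext t
    simp [Finsupp.sum, Finset.mul_sum, mul_left_comm]

open Finset

section Recurrence

variable {k : Type*} [Field k] (c : ℕ → k) (d : ℕ)

noncomputable def extendByRecurrence (a : ℤ) (u : ℤ → k) : ℤ → k
  | s => if s < a then u s else
      -(c 0)⁻¹ * ∑ j ∈ range d, c (j + 1) * extendByRecurrence a u (s - (j + 1 : ℕ))
termination_by s => (s - a + 1).toNat

variable {c d}

theorem extendByRecurrence_of_lt {a s : ℤ} (u : ℤ → k) (h : s < a) :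
    extendByRecurrence c d a u s = u s := by
  rw [extendByRecurrence, if_pos h]

theorem sum_range_mul_extendByRecurrence_eq_zero (hc : c 0 ≠ 0) {a s : ℤ} (u : ℤ → k)
    (h : a ≤ s) :
    ∑ j ∈ range (d + 1), c j * extendByRecurrence c d a u (s - j) = 0 := by
  rw [sum_range_succ', Nat.cast_zero, sub_zero, extendByRecurrence, if_neg h.not_gt]
  field_simp
  ring

theorem apply_eq_zero_of_recurrence (hc : c 0 ≠ 0) {a : ℤ} {w : ℤ → k}
    (hw : ∀ s, a ≤ s → ∑ j ∈ range (d + 1), c j * w (s - j) = 0)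
    (h0 : ∀ s, a - d ≤ s → s < a → w s = 0) {s : ℤ} (hs : a - d ≤ s) : w s = 0 := by
  suffices ∀ t, a ≤ t → ∀ s, a - d ≤ s → s < t → w s = 0 from
    this (max a (s + 1)) (by omega) s hs (by omega)
  intro t ht
  induction t, ht using Int.leInduction with
  | base => exact h0
  | succ t hat ih =>
    intro s hs hst
    rcases (Int.lt_add_one_iff.mp hst).lt_or_eq with hlt | rfl
    · exact ih s hs hlt
    have hrec := hw s hat
    rw [sum_range_succ', Nat.cast_zero, sub_zero,
      sum_eq_zero fun j hj => by rw [ih _ (by have := mem_range.mp hj; omega) (by omega), mul_zero],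
      zero_add] at hrec
    exact (mul_eq_zero.mp hrec).resolve_left hc

end Recurrence

open LaurentPolynomial

section Theta

variable {k : Type*} [Field k]

theorem theta_apply (p : LaurentPolynomial k) (w : ℤ → k) (t : ℤ) :
    theta p w t = ∑ i ∈ p.coeff.support, p.coeff i * w (t - i) := rfl

theorem theta_apply_of_support_subset {p : LaurentPolynomial k} {S : Finset ℤ}
    (hS : p.coeff.support ⊆ S) (w : ℤ → k) (t : ℤ) :
    theta p w t = ∑ i ∈ S, p.coeff i * w (t - i) :=
  Finsupp.sum_of_support_subset p.coeff hS (fun i a => a * w (t - i)) fun _ _ => zero_mul _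

theorem theta_add_apply_eq_sum_range {p : LaurentPolynomial k} {m : ℤ} {d : ℕ}
    (hsupp : p.coeff.support ⊆ Icc m (m + d)) (w : ℤ → k) (s : ℤ) :
    theta p w (s + m) = ∑ j ∈ range (d + 1), p.coeff (m + j) * w (s - j) := by
  have hS : p.coeff.support ⊆ (range (d + 1)).image fun j : ℕ => m + j := by
    intro i hi
    have := mem_Icc.mp (hsupp hi)
    exact mem_image.mpr ⟨(i - m).toNat, mem_range.mpr (by omega), by omega⟩
  rw [theta_apply_of_support_subset hS, sum_image fun _ _ _ _ h => by simpa using h]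
  exact sum_congr rfl fun j _ => by ring_nf

theorem theta_invert_apply (p : LaurentPolynomial k) (w : ℤ → k) (t : ℤ) :
    theta (invert p) w t = theta p (fun s => w (-s)) (-t) := by
  have hS : (invert p).coeff.support ⊆ p.coeff.support.image Neg.neg := fun i hi =>
    mem_image.mpr ⟨-i, by simpa using hi, neg_neg i⟩
  rw [theta_apply_of_support_subset hS, sum_image fun _ _ _ _ => neg_inj.mp, theta_apply]
  exact sum_congr rfl fun i _ => by simp only [invert_apply, neg_neg, neg_sub']

end Theta

section Kernel

open LinearMap

variable {k : Type*} [Field k] {p : LaurentPolynomial k} {m : ℤ} {d : ℕ}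

theorem coeff_support_invert_subset (hsupp : p.coeff.support ⊆ Icc m (m + d)) :
    (invert p).coeff.support ⊆ Icc (-(m + d)) (-(m + d) + d) := fun i hi => by
  have := mem_Icc.mp (hsupp (by simpa using hi))
  exact mem_Icc.mpr ⟨by omega, by omega⟩

theorem exists_theta_eq_zero_of_ge (hsupp : p.coeff.support ⊆ Icc m (m + d))
    (hm : p.coeff m ≠ 0) (u : ℤ → k) (a : ℤ) :
    ∃ w : ℤ → k, (∀ t < a, w t = u t) ∧ ∀ s, a ≤ s → theta p w (s + m) = 0 :=
  ⟨extendByRecurrence (fun j => p.coeff (m + j)) d a u, fun _ => extendByRecurrence_of_lt u,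
    fun s hs => by
      rw [theta_add_apply_eq_sum_range hsupp]
      exact sum_range_mul_extendByRecurrence_eq_zero (by simpa) u hs⟩

theorem exists_theta_eq_zero_of_lt (hsupp : p.coeff.support ⊆ Icc m (m + d))
    (hM : p.coeff (m + d) ≠ 0) (u : ℤ → k) (b : ℤ) :
    ∃ w : ℤ → k, (∀ t, b ≤ t → w t = u t) ∧ ∀ s < b, theta p w (s + m + d) = 0 := by
  obtain ⟨w, hwu, hw⟩ := exists_theta_eq_zero_of_ge (coeff_support_invert_subset hsupp)
    (by simpa using hM) (fun t => u (-t)) (-b + 1)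
  refine ⟨fun t => w (-t), fun t ht => by simpa using hwu (-t) (by omega), fun s hs => ?_⟩
  have := hw (-s) (by omega)
  rwa [theta_invert_apply, show -(-s + -(m + d)) = s + m + d by ring] at this

theorem apply_eq_zero_of_mem_ker_theta_of_ge (hsupp : p.coeff.support ⊆ Icc m (m + d))
    (hm : p.coeff m ≠ 0) {w : ℤ → k} (hw : w ∈ ker (theta p)) {a : ℤ}
    (h0 : ∀ t, a - d ≤ t → t < a → w t = 0) {t : ℤ} (ht : a - d ≤ t) : w t = 0 :=
  apply_eq_zero_of_recurrence (c := fun j => p.coeff (m + j)) (by simpa)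
    (fun s _ => by rw [← theta_add_apply_eq_sum_range hsupp, mem_ker.mp hw, Pi.zero_apply]) h0 ht

theorem apply_eq_zero_of_mem_ker_theta_of_lt (hsupp : p.coeff.support ⊆ Icc m (m + d))
    (hM : p.coeff (m + d) ≠ 0) {w : ℤ → k} (hw : w ∈ ker (theta p)) {b : ℤ}
    (h0 : ∀ t, b ≤ t → t < b + d → w t = 0) {t : ℤ} (ht : t < b + d) : w t = 0 := by
  have hw' : (fun s => w (-s)) ∈ ker (theta (invert p)) := mem_ker.mpr <| funext fun s => by
    simpa [theta_invert_apply] using congrFun (mem_ker.mp hw) (-s)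
  simpa using apply_eq_zero_of_mem_ker_theta_of_ge (coeff_support_invert_subset hsupp)
    (by simpa using hM) hw' (a := -b + 1) (fun s h1 h2 => h0 (-s) (by omega) (by omega))
    (t := -t) (by omega)

theorem eq_zero_of_mem_ker_theta_of_window (hsupp : p.coeff.support ⊆ Icc m (m + d))
    (hm : p.coeff m ≠ 0) (hM : p.coeff (m + d) ≠ 0) {w : ℤ → k} (hw : w ∈ ker (theta p))
    {t₀ : ℤ} (h0 : ∀ t, t₀ ≤ t → t < t₀ + d → w t = 0) : w = 0 := by
  funext t
  by_cases ht : t₀ ≤ t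
  · exact apply_eq_zero_of_mem_ker_theta_of_ge hsupp hm hw (a := t₀ + d)
      (fun s h1 h2 => h0 s (by omega) h2) (by omega)
  · exact apply_eq_zero_of_mem_ker_theta_of_lt hsupp hM hw h0 (by omega)

theorem exists_mem_ker_theta_eq_on_window (hsupp : p.coeff.support ⊆ Icc m (m + d))
    (hm : p.coeff m ≠ 0) (hM : p.coeff (m + d) ≠ 0) (u : ℤ → k) (t₀ : ℤ) :
    ∃ w ∈ ker (theta p), ∀ t, t₀ ≤ t → t < t₀ + d → w t = u t := by
  obtain ⟨w₁, hw₁u, hw₁⟩ := exists_theta_eq_zero_of_ge hsupp hm u (t₀ + d)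
  obtain ⟨w₂, hw₂w₁, hw₂⟩ := exists_theta_eq_zero_of_lt hsupp hM w₁ t₀
  refine ⟨w₂, mem_ker.mpr (funext fun t => show theta p w₂ t = 0 from ?_),
    fun t h1 h2 => (hw₂w₁ t h1).trans (hw₁u t h2)⟩
  by_cases ht : t₀ + d ≤ t - m
  · -- every value `w₂ (t - i)` entering here lies in `[t₀, ∞)`, where `w₂ = w₁`
    calc theta p w₂ t = theta p w₁ (t - m + m) := by
          rw [sub_add_cancel, theta_apply, theta_apply]
          exact sum_congr rfl fun i hi => by
            rw [hw₂w₁ _ (by have := mem_Icc.mp (hsupp hi); omega)]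
      _ = 0 := hw₁ _ ht
  · have := hw₂ (t - m - d) (by omega)
    rwa [show t - m - d + m + d = t by ring] at this

theorem finrank_ker_theta (hsupp : p.coeff.support ⊆ Icc m (m + d))
    (hm : p.coeff m ≠ 0) (hM : p.coeff (m + d) ≠ 0) : Module.finrank k (ker (theta p)) = d := by
  let E : ker (theta p) →ₗ[k] (Fin d → k) :=
    funLeft k k (fun j : Fin d => (j : ℤ)) ∘ₗ (ker (theta p)).subtype
  have hinj : Function.Injective E := by
    refine (injective_iff_map_eq_zero E).mpr fun w hw => Subtype.ext ?_
    refine eq_zero_of_mem_ker_theta_of_window hsupp hm hM w.2 (t₀ := 0) fun t h1 h2 => ?_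
    simpa [E, Int.toNat_of_nonneg h1] using congrFun hw ⟨t.toNat, by omega⟩
  have hsurj : Function.Surjective E := fun v => by
    obtain ⟨w, hw, hwv⟩ := exists_mem_ker_theta_eq_on_window hsupp hm hM
      (Function.extend (fun j : Fin d => (j : ℤ)) v 0) 0
    have hcast : Function.Injective fun j : Fin d => (j : ℤ) := fun _ _ h =>
      Fin.ext (Nat.cast_injective h)
    refine ⟨⟨w, hw⟩, funext fun j => ?_⟩
    rw [← hcast.extend_apply v 0 j]
    exact hwv j (by omega) (by omega)
  exact (LinearEquiv.ofBijective E ⟨hinj, hsurj⟩).finrank_eq.trans (Module.finrank_fin_fun k)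

end Kernel

/-- For a nonzero Laurent polynomial `p` of degree span `d` (difference of the largest
and smallest exponents with nonzero coefficient), the kernel of the shift operator
`θ(p)` on `k^ℤ` has dimension `d`; in particular a kernel trajectory is determined by
its values at any `d` consecutive time points. -/
theorem ker_theta_finrank_eq_degree_span {k : Type*} [Field k]
    (p : LaurentPolynomial k) (hp : p ≠ 0)
    (d : ℕ)
    (hd : (d : ℤ) = p.coeff.support.max' (Finsupp.support_nonempty_iff.mpr (mt AddMonoidAlgebra.coeff_eq_zero.mp hp))
        - p.coeff.support.min' (Finsupp.support_nonempty_iff.mpr (mt AddMonoidAlgebra.coeff_eq_zero.mp hp))) :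
    Module.finrank k (LinearMap.ker (theta p)) = d ∧
    ∀ w w' : ℤ → k, w ∈ LinearMap.ker (theta p) → w' ∈ LinearMap.ker (theta p) →
      ∀ t₀ : ℤ, (∀ t : ℤ, t₀ ≤ t → t < t₀ + d → w t = w' t) → w = w' := by
  set hne := Finsupp.support_nonempty_iff.mpr (mt AddMonoidAlgebra.coeff_eq_zero.mp hp)
  set m := p.coeff.support.min' hne
  have hmax : p.coeff.support.max' hne = m + d := by omega
  have hsupp : p.coeff.support ⊆ Icc m (m + d) := fun i hi =>
    mem_Icc.mpr ⟨min'_le _ i hi, hmax ▸ le_max' _ i hi⟩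
  have hm : p.coeff m ≠ 0 := Finsupp.mem_support_iff.mp (min'_mem _ hne)
  have hM : p.coeff (m + d) ≠ 0 := hmax ▸ Finsupp.mem_support_iff.mp (max'_mem _ hne)
  refine ⟨finrank_ker_theta hsupp hm hM, fun w w' hw hw' t₀ hwin => ?_⟩
  exact sub_eq_zero.mp <| eq_zero_of_mem_ker_theta_of_window hsupp hm hM
    (Submodule.sub_mem _ hw hw') fun t h1 h2 => sub_eq_zero.mpr (hwin t h1 h2)
end

section
/- Let k be a field and let f : U → A, g : V → A, h : V → B, k' : W → B be linear maps. Form the pushout P = (A ⊕ B)/ker-pushing, i.e., P = (A ⊕ B)/im(⟨g, -h⟩), with canonical maps ι_A : A → P and ι_B : B → P. Then the relational composite of the linear relations ker[f ; -g] ⊆ U⊕V and ker[h ; -k'] ⊆ V⊕W equals ker[ι_A∘f ; -ι_B∘k'] ⊆ U⊕W. That is: there exists v ∈ V with f(u) = g(v) and h(v) = k'(w) if and only if ι_A(f(u)) = ι_B(k'(w)) in P. -/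
/-! Two elements `a ∈ A`, `b ∈ B` become equal in the pushout exactly when `(a, -b)` is a relation
`(g v, -h v)`, i.e. when some `v` has `g v = a` and `h v = b`. Taking `a = f u` and `b = k' w`, this
`v` is precisely the middle point witnessing the relational composite. -/

theorem LinearMap.mkQ_range_prod_neg_inl_eq_inr_iff {R V A B : Type*} [Ring R]
    [AddCommGroup V] [AddCommGroup A] [AddCommGroup B] [Module R V] [Module R A] [Module R B]
    (g : V →ₗ[R] A) (h : V →ₗ[R] B) (a : A) (b : B) :
    (range (g.prod (-h))).mkQ (a, 0) = (range (g.prod (-h))).mkQ (0, b) ↔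
      ∃ v, g v = a ∧ h v = b := by
  rw [Submodule.mkQ_apply, Submodule.mkQ_apply, Submodule.Quotient.eq]
  simp only [mem_range, prod_apply, Function.prod, neg_apply, Prod.mk_sub_mk, sub_zero, zero_sub,
    Prod.ext_iff, neg_inj]

/-- Composition of kernel relations via pushout: for linear maps `f : U → A`,
`g : V → A`, `h : V → B`, `k' : W → B`, with pushout `P = (A × B) ⧸ im⟨g, -h⟩` and
canonical maps `ι_A, ι_B`, the relational composite of `ker[f ; -g]` and `ker[h ; -k']`
equals `ker[ι_A ∘ f ; -ι_B ∘ k']`: there exists `v` with `f u = g v` and `h v = k' w`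
iff `ι_A (f u) = ι_B (k' w)` in `P`. -/
theorem kernel_relations_compose_via_pushout
    {k : Type*} [Field k]
    {U V W A B : Type*} [AddCommGroup U] [AddCommGroup V] [AddCommGroup W]
    [AddCommGroup A] [AddCommGroup B]
    [Module k U] [Module k V] [Module k W] [Module k A] [Module k B]
    (f : U →ₗ[k] A) (g : V →ₗ[k] A) (h : V →ₗ[k] B) (k' : W →ₗ[k] B) :
    ∀ (u : U) (w : W),
      (∃ v : V, f u = g v ∧ h v = k' w) ↔
      ((LinearMap.range (g.prod (-h))).mkQ (f u, 0)
        = (LinearMap.range (g.prod (-h))).mkQ (0, k' w)) := by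
  intro u w
  simp only [LinearMap.mkQ_range_prod_neg_inl_eq_inr_iff, eq_comm (a := f u)]
end

section
/- Let θ : Mat(k[s,s⁻¹]) → Vect_k be the functor sending n to (kⁿ)^ℤ and a matrix to its induced shift-operator map. Then θ preserves pushouts in the following sense: for matrices A₁ : n → d₁, B₁ : m → d₁, A₂ : m → d₂, B₂ : p → d₂, and pushout maps C : d₁ → e, D : d₂ → e of the span (B₁, A₂) (so C B₁ = D A₂), the relation ker θ[C A₁ ; -D B₂] equals the relational composite of ker θ[A₁ ; -B₁] and ker θ[A₂ ; -B₂]; that is, θ(C A₁) x = θ(D B₂) y if and only if there exists z with θA₁ x = θB₁ z and θA₂ z = θB₂ y. -/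
open LaurentPolynomial Polynomial

section Theta
variable {k : Type*} [Field k]

noncomputable def shiftRep (k : Type*) [Field k] : Multiplicative ℤ →* (Module.End k (ℤ → k)) where
  toFun g := {
    toFun := fun w t => w (t - g.toAdd)
    map_add' := fun _ _ => rfl
    map_smul' := fun _ _ => rfl }
  map_one' := by ext w t; simp
  map_mul' g h := by ext w t; simp [sub_sub]

noncomputable def lsmul (k : Type*) [Field k] : LaurentPolynomial k →ₐ[k] Module.End k (ℤ → k) :=
  AddMonoidAlgebra.lift k _ ℤ (shiftRep k)

theorem lsmul_apply (r : LaurentPolynomial k) (w : ℤ → k) (t : ℤ) :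
    lsmul k r w t = r.coeff.sum fun e a => a * w (t - e) := by
  rw [lsmul, AddMonoidAlgebra.lift_apply]
  simp [Finsupp.sum, shiftRep]

noncomputable instance instModW (k : Type*) [Field k] : Module (LaurentPolynomial k) (ℤ → k) where
  smul r w := lsmul k r w
  one_smul w := by show lsmul k 1 w = w; rw [map_one]; rfl
  mul_smul r s w := by show lsmul k (r*s) w = lsmul k r (lsmul k s w); rw [map_mul]; rfl
  smul_zero r := (lsmul k r).map_zero
  smul_add r u v := (lsmul k r).map_add u v
  add_smul r s w := by show lsmul k (r+s) w = lsmul k r w + lsmul k s w; rw [map_add]; rfl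
  zero_smul w := by show lsmul k 0 w = 0; rw [map_zero]; rfl

theorem smulW_apply (r : LaurentPolynomial k) (w : ℤ → k) (t : ℤ) :
    (r • w) t = r.coeff.sum fun e a => a * w (t - e) := lsmul_apply r w t

noncomputable def sM (a : LaurentPolynomial k) (ha : a ≠ 0) : ℤ :=
  a.coeff.support.min' (Finsupp.support_nonempty_iff.mpr (fun h => ha (AddMonoidAlgebra.coeff_eq_zero.mp h)))
noncomputable def sN (a : LaurentPolynomial k) (ha : a ≠ 0) : ℤ :=
  a.coeff.support.max' (Finsupp.support_nonempty_iff.mpr (fun h => ha (AddMonoidAlgebra.coeff_eq_zero.mp h)))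

noncomputable def vp (a : LaurentPolynomial k) (ha : a ≠ 0) (w : ℤ → k) (u : ℕ) : k :=
  if (u : ℤ) + sM a ha - sN a ha < 0 then 0
  else (a.coeff (sM a ha))⁻¹ * (w ((u : ℤ) + sM a ha)
    - ∑ e ∈ (a.coeff.support.erase (sM a ha)).attach, a.coeff e.1 * vp a ha w (((u:ℤ) + sM a ha - e.1).toNat))
termination_by u
decreasing_by
  · rename_i h e
    have hs := Finset.mem_erase.mp e.2
    have hmin : sM a ha ≤ e.1 := a.coeff.support.min'_le e.1 hs.2
    have hmax : e.1 ≤ sN a ha := a.coeff.support.le_max' e.1 hs.2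
    have hne : e.1 ≠ sM a ha := hs.1
    omega

noncomputable def vn (a : LaurentPolynomial k) (ha : a ≠ 0) (w : ℤ → k) (u : ℕ) : k :=
  (a.coeff (sN a ha))⁻¹ * (w (-((u:ℤ)+1) + sN a ha) - ∑ e ∈ (a.coeff.support.erase (sN a ha)).attach,
    a.coeff e.1 * (if h : -((u:ℤ)+1) + sN a ha - e.1 < 0
      then vn a ha w (-(-((u:ℤ)+1) + sN a ha - e.1)-1).toNat
      else vp a ha w (-((u:ℤ)+1) + sN a ha - e.1).toNat))
termination_by u
decreasing_by
  · rename_i e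
    have hs := Finset.mem_erase.mp e.2
    have hmax : e.1 ≤ sN a ha := a.coeff.support.le_max' e.1 hs.2
    have hne : e.1 ≠ sN a ha := hs.1
    omega

noncomputable def vfull (a : LaurentPolynomial k) (ha : a ≠ 0) (w : ℤ → k) : ℤ → k := fun x =>
  if x < 0 then vn a ha w (-x-1).toNat else vp a ha w x.toNat

theorem vfull_spec (a : LaurentPolynomial k) (ha : a ≠ 0) (w : ℤ → k) (t : ℤ) :
    ∑ e ∈ a.coeff.support, a.coeff e * vfull a ha w (t - e) = w t := by
  have hsupp : a.coeff.support.Nonempty := Finsupp.support_nonempty_iff.mpr (fun h => ha (AddMonoidAlgebra.coeff_eq_zero.mp h))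
  have hM : sM a ha ∈ a.coeff.support := a.coeff.support.min'_mem hsupp
  have hN : sN a ha ∈ a.coeff.support := a.coeff.support.max'_mem hsupp
  have hMN : sM a ha ≤ sN a ha := a.coeff.support.min'_le _ hN
  have haM : a.coeff (sM a ha) ≠ 0 := Finsupp.mem_support_iff.mp hM
  have haN : a.coeff (sN a ha) ≠ 0 := Finsupp.mem_support_iff.mp hN
  by_cases ht : sN a ha ≤ t
  · have e1 : vfull a ha w (t - sM a ha) = vp a ha w (t - sM a ha).toNat := by
      rw [vfull, if_neg (by omega)]
    rw [vp, if_neg (by omega)] at e1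
    rw [show (((t - sM a ha).toNat : ℤ) + sM a ha) = t by omega] at e1
    rw [Finset.sum_attach _ (fun e => a.coeff e * vp a ha w (t - e).toNat)] at e1
    have e2 : ∀ e ∈ a.coeff.support.erase (sM a ha),
        a.coeff e * vp a ha w (t - e).toNat
          = a.coeff e * vfull a ha w (t - e) := by
      intro e he
      have hs := Finset.mem_erase.mp he
      have hle : e ≤ sN a ha := a.coeff.support.le_max' e hs.2
      rw [vfull, if_neg (by omega)]
    rw [Finset.sum_congr rfl e2] at e1
    rw [← Finset.add_sum_erase _ _ hM, e1]
    field_simp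
    ring
  · push_neg at ht
    have e1 : vfull a ha w (t - sN a ha) = vn a ha w (-(t - sN a ha)-1).toNat := by
      rw [vfull, if_pos (by omega)]
    rw [vn] at e1
    rw [show (-(((-(t - sN a ha)-1).toNat:ℤ)+1) + sN a ha) = t by omega] at e1
    have e2 : ∀ e ∈ a.coeff.support.erase (sN a ha),
        a.coeff e * (if h : t - e < 0 then vn a ha w (-(t - e)-1).toNat else vp a ha w (t - e).toNat)
          = a.coeff e * vfull a ha w (t - e) := by
      intro e he
      rw [vfull]
      split <;> rfl
    rw [Finset.sum_attach _ (fun e => a.coeff e * (if h : t - e < 0 then vn a ha w (-(t - e)-1).toNat else vp a ha w (t - e).toNat))] at e1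
    rw [Finset.sum_congr rfl e2] at e1
    rw [← Finset.add_sum_erase _ _ hN, e1]
    field_simp
    ring

theorem exists_smul_eq_W (a : LaurentPolynomial k) (ha : a ≠ 0) (w : ℤ → k) :
    ∃ v : ℤ → k, a • v = w :=
  ⟨vfull a ha w, funext fun t => by rw [smulW_apply]; exact vfull_spec a ha w t⟩

theorem laurent_ideal_principal (I : Ideal (LaurentPolynomial k)) :
    ∃ a, I = Ideal.span {a} := by
  set J : Ideal (Polynomial k) := I.comap (Polynomial.toLaurent (R := k)) with hJ
  obtain ⟨g, hg⟩ := (IsPrincipalIdealRing.principal J).principal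
  refine ⟨toLaurent g, le_antisymm ?_ ?_⟩
  · intro x hx
    obtain ⟨nn, f', hf'⟩ := x.exists_T_pow
    have hf'I : f' ∈ J := by
      simp only [hJ, Ideal.mem_comap, hf']
      exact Ideal.mul_mem_right _ _ hx
    rw [hg, Ideal.submodule_span_eq, Ideal.mem_span_singleton'] at hf'I
    obtain ⟨c, hc⟩ := hf'I
    rw [Ideal.mem_span_singleton']
    refine ⟨toLaurent c * T (-(nn:ℤ)), ?_⟩
    have : toLaurent c * T (-(nn:ℤ)) * toLaurent g = toLaurent f' * T (-(nn:ℤ)) := by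
      rw [← hc]; push_cast [map_mul]; ring
    rw [this, hf']
    rw [mul_assoc, ← T_add]
    simp [T_zero]
  · rw [Ideal.span_le, Set.singleton_subset_iff]
    have hgJ : g ∈ J := by
      rw [hg, Ideal.submodule_span_eq]
      exact Ideal.mem_span_singleton_self g
    exact hgJ

theorem baerW : Module.Baer (LaurentPolynomial k) (ℤ → k) := by
  intro I g
  obtain ⟨a, rfl⟩ := laurent_ideal_principal I
  by_cases ha : a = 0
  · refine ⟨0, fun x hx => ?_⟩
    subst ha
    have hx0 : x = 0 := by
      simpa [Ideal.span_singleton_eq_bot.mpr rfl] using hx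
    have hz : (⟨x, hx⟩ : Ideal.span ({(0:LaurentPolynomial k)} : Set (LaurentPolynomial k))) = 0 :=
      Subtype.ext hx0
    rw [hz, map_zero, LinearMap.zero_apply]
  · have hamem : a ∈ Ideal.span ({a} : Set (LaurentPolynomial k)) := Ideal.mem_span_singleton_self a
    obtain ⟨v, hv⟩ := exists_smul_eq_W a ha (g ⟨a, hamem⟩)
    refine ⟨LinearMap.toSpanSingleton _ _ v, fun x hx => ?_⟩
    obtain ⟨c, hc⟩ := Ideal.mem_span_singleton'.mp hx
    have h1 : (⟨x, hx⟩ : Ideal.span ({a} : Set (LaurentPolynomial k))) = c • ⟨a, hamem⟩ := by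
      ext; simp [← hc, smul_eq_mul]
    rw [h1, map_smul, ← hv, LinearMap.toSpanSingleton_apply, ← hc, mul_smul]

theorem injW : Module.Injective (LaurentPolynomial k) (ℤ → k) := baerW.injective

end Theta

/-- The shift-operator action of a matrix over `k[s,s⁻¹]` on vector-valued biinfinite
sequences. -/
noncomputable def thetaM {k : Type*} [Field k] {d n : ℕ}
    (M : Matrix (Fin d) (Fin n) (LaurentPolynomial k))
    (w : ℤ → Fin n → k) : ℤ → Fin d → k :=
  fun t j => ∑ i, Finsupp.sum (M j i).coeff fun e a => a * w (t - e) i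

section Lin
variable {k : Type*} [Field k]

/-- `matVec M z j = ∑ i, M j i • z i`, matrix action on vectors of streams. -/
noncomputable def matVec {d q : ℕ} (M : Matrix (Fin d) (Fin q) (LaurentPolynomial k))
    (z : Fin q → (ℤ → k)) : Fin d → (ℤ → k) := fun j => ∑ i, M j i • z i

noncomputable def tau {q : ℕ} (w : ℤ → Fin q → k) : Fin q → (ℤ → k) := fun i s => w s i

theorem thetaM_apply {d q : ℕ} (M : Matrix (Fin d) (Fin q) (LaurentPolynomial k))
    (w : ℤ → Fin q → k) (t : ℤ) (j : Fin d) :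
    thetaM M w t j = matVec M (tau w) j t := by
  simp only [thetaM, matVec, tau, Finset.sum_apply]
  refine Finset.sum_congr rfl fun i _ => ?_
  rw [smulW_apply]; rfl

theorem theta_eq_iff {d q q' : ℕ} (M : Matrix (Fin d) (Fin q) (LaurentPolynomial k))
    (M' : Matrix (Fin d) (Fin q') (LaurentPolynomial k))
    (w : ℤ → Fin q → k) (w' : ℤ → Fin q' → k) :
    thetaM M w = thetaM M' w' ↔ matVec M (tau w) = matVec M' (tau w') := by
  constructor
  · intro h
    funext j t
    have := congrFun (congrFun h t) j
    rwa [thetaM_apply, thetaM_apply] at this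
  · intro h
    funext t j
    rw [thetaM_apply, thetaM_apply, h]

theorem matVec_mul {d q r : ℕ} (M : Matrix (Fin d) (Fin q) (LaurentPolynomial k))
    (N : Matrix (Fin q) (Fin r) (LaurentPolynomial k)) (z : Fin r → (ℤ → k)) :
    matVec (M * N) z = matVec M (matVec N z) := by
  funext j
  simp only [matVec, Matrix.mul_apply, Finset.smul_sum, Finset.sum_smul, mul_smul]
  exact Finset.sum_comm

end Lin

set_option maxHeartbeats 1000000 in
/-- θ preserves pushouts: given cospans `n →A₁ d ←B₁ m` and `m →A₂ e ←B₂ l` of matrices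
over `k[s,s⁻¹]`, composed via the pushout `C : d → p`, `D : e → p` of `B₁` and `A₂`
(so `C B₁ = D A₂`, with the universal property), the kernel relation
`ker θ[C A₁ ; -D B₂]` equals the relational composite of `ker θ[A₁ ; -B₁]` and
`ker θ[A₂ ; -B₂]`. -/
theorem theta_preserves_pushout_composition {k : Type*} [Field k]
    {n m l d e p : ℕ}
    (A₁ : Matrix (Fin d) (Fin n) (LaurentPolynomial k))
    (B₁ : Matrix (Fin d) (Fin m) (LaurentPolynomial k))
    (A₂ : Matrix (Fin e) (Fin m) (LaurentPolynomial k))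
    (B₂ : Matrix (Fin e) (Fin l) (LaurentPolynomial k))
    (C : Matrix (Fin p) (Fin d) (LaurentPolynomial k))
    (D : Matrix (Fin p) (Fin e) (LaurentPolynomial k))
    (hcomm : C * B₁ = D * A₂)
    (huniv : ∀ (p' : ℕ) (C' : Matrix (Fin p') (Fin d) (LaurentPolynomial k))
      (D' : Matrix (Fin p') (Fin e) (LaurentPolynomial k)), C' * B₁ = D' * A₂ →
        ∃! E : Matrix (Fin p') (Fin p) (LaurentPolynomial k), E * C = C' ∧ E * D = D') :
    ∀ (x : ℤ → Fin n → k) (y : ℤ → Fin l → k),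
      thetaM (C * A₁) x = thetaM (D * B₂) y ↔
      ∃ z : ℤ → Fin m → k, thetaM A₁ x = thetaM B₁ z ∧ thetaM A₂ z = thetaM B₂ y := by
  intro x y
  constructor
  · -- hard direction
    intro h
    rw [theta_eq_iff, matVec_mul, matVec_mul] at h
    set u : Fin d → (ℤ → k) := matVec A₁ (tau x) with hu
    set v : Fin e → (ℤ → k) := matVec B₂ (tau y) with hvdef
    -- h : matVec C u = matVec D v
    have hker : ∀ (c : Fin d → LaurentPolynomial k) (c' : Fin e → LaurentPolynomial k),
        (∀ i : Fin m, ∑ j, c j * B₁ j i = ∑ j, c' j * A₂ j i) →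
        ∃ ε : Fin p → LaurentPolynomial k,
          (∀ j, ∑ i, ε i * C i j = c j) ∧ (∀ j, ∑ i, ε i * D i j = c' j) := by
      intro c c' hcc
      have hmat : (Matrix.of fun (_ : Fin 1) j => c j) * B₁
          = (Matrix.of fun (_ : Fin 1) j => c' j) * A₂ := by
        apply Matrix.ext
        intro i0 i
        simp only [Matrix.mul_apply, Matrix.of_apply]
        exact hcc i
      obtain ⟨E, ⟨hE1, hE2⟩, -⟩ := huniv 1 _ _ hmat
      refine ⟨fun i => E 0 i, fun j => ?_, fun j => ?_⟩
      · have := congrFun (congrFun hE1 0) j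
        simpa [Matrix.mul_apply] using this
      · have := congrFun (congrFun hE2 0) j
        simpa [Matrix.mul_apply] using this
    let g : ((Fin d → LaurentPolynomial k) × (Fin e → LaurentPolynomial k))
        →ₗ[LaurentPolynomial k] (Fin m → LaurentPolynomial k) :=
      { toFun := fun ξ => fun i => (∑ j, ξ.1 j * B₁ j i) - (∑ j, ξ.2 j * A₂ j i)
        map_add' := by
          intro ξ η
          funext i
          simp only [Prod.fst_add, Prod.snd_add, Pi.add_apply, add_mul,
            Finset.sum_add_distrib]
          ring
        map_smul' := by
          intro r ξ
          funext i
          simp only [Prod.smul_fst, Prod.smul_snd, Pi.smul_apply, smul_eq_mul,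
            RingHom.id_apply, Finset.mul_sum, mul_sub, mul_assoc] }
    let wmap : ((Fin d → LaurentPolynomial k) × (Fin e → LaurentPolynomial k))
        →ₗ[LaurentPolynomial k] (ℤ → k) :=
      { toFun := fun ξ => (∑ j, ξ.1 j • u j) - (∑ j, ξ.2 j • v j)
        map_add' := by
          intro ξ η
          simp only [Prod.fst_add, Prod.snd_add, Pi.add_apply, add_smul,
            Finset.sum_add_distrib]
          abel
        map_smul' := by
          intro r ξ
          simp only [Prod.smul_fst, Prod.smul_snd, Pi.smul_apply, smul_eq_mul,
            RingHom.id_apply, mul_smul, ← Finset.smul_sum, ← smul_sub] }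
    have g_apply : ∀ c c' i, g (c, c') i
        = (∑ j, c j * B₁ j i) - (∑ j, c' j * A₂ j i) := fun _ _ _ => rfl
    have wmap_apply : ∀ c c', wmap (c, c')
        = (∑ j, c j • u j) - (∑ j, c' j • v j) := fun _ _ => rfl
    have hker0 : ∀ ξ, g ξ = 0 → wmap ξ = 0 := by
      rintro ⟨c, c'⟩ hξ
      have hcc : ∀ i : Fin m, ∑ j, c j * B₁ j i = ∑ j, c' j * A₂ j i := by
        intro i
        have := congrFun hξ i
        rw [g_apply] at this
        simpa [sub_eq_zero] using this
      obtain ⟨ε, hε1, hε2⟩ := hker c c' hcc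
      have key : ∀ {q : ℕ} (M : Matrix (Fin p) (Fin q) (LaurentPolynomial k))
          (z : Fin q → (ℤ → k)),
          ∑ j, (∑ i, ε i * M i j) • z j = ∑ i, ε i • matVec M z i := by
        intro q M z
        simp only [matVec, Finset.sum_smul, Finset.smul_sum, mul_smul]
        exact Finset.sum_comm
      have e1 : ∑ j, c j • u j = ∑ i, ε i • matVec C u i := by
        rw [← key C u]
        exact Finset.sum_congr rfl fun j _ => by rw [hε1 j]
      have e2 : ∑ j, c' j • v j = ∑ i, ε i • matVec D v i := by
        rw [← key D v]
        exact Finset.sum_congr rfl fun j _ => by rw [hε2 j]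
      rw [wmap_apply, e1, e2, h, sub_self]
    have hle : LinearMap.ker g ≤ LinearMap.ker wmap := by
      intro ξ hξ
      exact LinearMap.mem_ker.mpr (hker0 ξ (LinearMap.mem_ker.mp hξ))
    let wbar := Submodule.liftQ (LinearMap.ker g) wmap hle
    let eqv := LinearMap.quotKerEquivRange g
    let h0 : LinearMap.range g →ₗ[LaurentPolynomial k] (ℤ → k) :=
      wbar.comp (eqv.symm.toLinearMap)
    have fact : ∀ ξ, h0 ⟨g ξ, LinearMap.mem_range_self g ξ⟩ = wmap ξ := by
      intro ξ
      have hsym : eqv.symm ⟨g ξ, LinearMap.mem_range_self g ξ⟩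
          = Submodule.Quotient.mk ξ := by
        rw [LinearEquiv.symm_apply_eq]
        exact Subtype.ext (LinearMap.quotKerEquivRange_apply_mk g ξ).symm
      show wbar (eqv.symm ⟨g ξ, LinearMap.mem_range_self g ξ⟩) = wmap ξ
      rw [hsym]
      exact Submodule.liftQ_apply _ wmap ξ
    obtain ⟨hh, hhh⟩ := injW.out (Submodule.subtype (LinearMap.range g))
      (Submodule.injective_subtype _) h0
    have hz : ∀ ξ, hh (g ξ) = wmap ξ := by
      intro ξ
      have := hhh ⟨g ξ, LinearMap.mem_range_self g ξ⟩
      rw [fact ξ] at this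
      exact this
    set z : Fin m → (ℤ → k) :=
      fun i => hh ((Pi.single i 1 : Fin m → LaurentPolynomial k)) with hzdef
    have hmv : ∀ {q : ℕ} (M : Matrix (Fin q) (Fin m) (LaurentPolynomial k)) (j : Fin q),
        matVec M z j = hh (fun i => M j i) := by
      intro q M j
      have h1 : (fun i => M j i) = ∑ i, Pi.single i (M j i) := by
        rw [Finset.univ_sum_single (fun i => M j i)]
      rw [h1, map_sum]
      refine Finset.sum_congr rfl fun i _ => ?_
      have h2 : (Pi.single i (M j i) : Fin m → LaurentPolynomial k)
          = M j i • (Pi.single i 1 : Fin m → LaurentPolynomial k) := by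
        rw [← Pi.single_smul, smul_eq_mul, mul_one]
      rw [h2, map_smul]
    have claim1 : matVec B₁ z = u := by
      funext j
      rw [hmv B₁ j]
      have hrow : (fun i => B₁ j i) = g ((Pi.single j 1 : Fin d → LaurentPolynomial k), 0) := by
        funext i
        rw [g_apply]
        simp [Pi.single_apply, Finset.sum_ite_eq']
      rw [hrow, hz, wmap_apply]
      simp [Pi.single_apply, ite_smul, Finset.sum_ite_eq']
    have claim2 : matVec A₂ z = v := by
      funext j
      rw [hmv A₂ j]
      have hrow : (fun i => A₂ j i)
          = -(g (0, (Pi.single j 1 : Fin e → LaurentPolynomial k))) := by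
        funext i
        rw [Pi.neg_apply, g_apply]
        simp [Pi.single_apply, Finset.sum_ite_eq']
      rw [hrow, map_neg, hz, wmap_apply]
      simp [Pi.single_apply, ite_smul, Finset.sum_ite_eq']
    refine ⟨fun t i => z i t, ?_, ?_⟩
    · rw [theta_eq_iff]
      exact claim1.symm
    · rw [theta_eq_iff]
      exact claim2
  · -- easy direction
    rintro ⟨z, h1, h2⟩
    rw [theta_eq_iff] at h1 h2 ⊢
    rw [matVec_mul, matVec_mul, h1, ← matVec_mul, hcomm, matVec_mul, h2]
end

section
/- Let k be a field and s act on k^ℤ as the delay. The behaviour {(w₁,w₂) ∈ k^ℤ ⊕ k^ℤ | w₁ = w₂} is controllable, and it is the maximal controllable sub-behaviour of {(w₁,w₂) | (s+1)·w₁ = (s+1)·w₂}: every controllable linear time-invariant behaviour contained in the latter is contained in the diagonal behaviour. -/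
/-- Willems' controllability for behaviours of biinfinite `k × k`-valued trajectories. -/
def Controllable {k : Type*} [Field k] (B : Set (ℤ → k × k)) : Prop :=
  ∀ w ∈ B, ∀ w' ∈ B, ∀ t₀ : ℤ, ∃ w'' ∈ B, ∃ t₀' : ℤ, t₀ < t₀' ∧
    (∀ t : ℤ, t ≤ t₀ → w'' t = w t) ∧ (∀ t : ℤ, t₀' ≤ t → w'' t = w' (t - t₀'))

/-- The diagonal behaviour `{(w₁,w₂) | w₁ = w₂}` is controllable, and it is the maximal
controllable sub-behaviour of `{(w₁,w₂) | (s+1)·w₁ = (s+1)·w₂}`: every controllable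
linear time-invariant behaviour contained in the latter is contained in the diagonal. -/
theorem diagonal_is_maximal_controllable_subbehaviour {k : Type*} [Field k]
    (Diag : Set (ℤ → k × k)) (hDiag : Diag = {w | ∀ t : ℤ, (w t).1 = (w t).2})
    (B : Set (ℤ → k × k))
    (hB : B = {w | ∀ t : ℤ, (w (t - 1)).1 + (w t).1 = (w (t - 1)).2 + (w t).2}) :
    Controllable Diag ∧
    ∀ C : Set (ℤ → k × k), C ⊆ B →
      -- `C` is a linear subspace
      (∀ w ∈ C, ∀ v ∈ C, w + v ∈ C) → (∀ (a : k), ∀ w ∈ C, a • w ∈ C) →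
      -- `C` is time-invariant
      (∀ w ∈ C, ∀ i : ℤ, (fun t => w (t + i)) ∈ C) →
      Controllable C →
      C ⊆ Diag := by
  subst hDiag hB
  constructor
  · intro w hw w' hw' t₀
    refine ⟨fun t => if t ≤ t₀ then w t else w' (t - (t₀ + 1)), ?_, t₀ + 1, by omega, ?_, ?_⟩
    · intro t
      dsimp only
      split
      · exact hw t
      · exact hw' _
    · intro t ht; simp [ht]
    · intro t ht; simp [show ¬ t ≤ t₀ by omega]
  · intro C hCB hadd hsmul _ hctrl w hw
    intro t₀
    have h0 : (0 : ℤ → k × k) ∈ C := by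
      have := hsmul 0 w hw
      simpa using this
    obtain ⟨w'', hw'', t₀', ht₀', hle, hge⟩ := hctrl w hw 0 h0 t₀
    have hB'' := hCB hw''
    set v : ℤ → k := fun t => (w'' t).1 - (w'' t).2 with hv
    have halt : ∀ t : ℤ, v (t - 1) = - v t := by
      intro t
      have h := hB'' t
      simp only [hv]
      linear_combination h
    have hzero : ∀ n : ℕ, v (t₀' - n) = 0 := by
      intro n
      induction n with
      | zero =>
        have := hge t₀' le_rfl
        simp [hv, this]
      | succ m ih =>
        have h := halt (t₀' - m)
        have heq : t₀' - ((m : ℤ) + 1) = t₀' - m - 1 := by ring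
        push_cast
        rw [heq, h, ih, neg_zero]
    have hv0 : v t₀ = 0 := by
      have h := hzero (t₀' - t₀).toNat
      rw [Int.toNat_of_nonneg (by omega)] at h
      simpa using h
    have hwt : w'' t₀ = w t₀ := hle t₀ le_rfl
    have : (w'' t₀).1 - (w'' t₀).2 = 0 := hv0
    rw [hwt] at this
    exact sub_eq_zero.mp this
end

section
/- Let k be a field and R = k[s,s⁻¹]. For column vectors B = (B₁,B₂), C = (C₁,C₂) over R with Laurent polynomial entries B₁,B₂,C₁,C₂, if gcd(B₂, C₁) = 1 and gcd(B₁,B₂) = gcd(C₁,C₂) = 1, then gcd(C₂' B₂, B₁' C₁) = 1, where G = gcd(B₁, C₂), B₁ = G B₁', C₂ = G C₂'. -/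
/-- The key coprimality step for controllability of interconnections: in `k[s,s⁻¹]`,
if `gcd(B₂, C₁) = 1` (coprime interface), `gcd(B₁, B₂) = gcd(C₁, C₂) = 1`
(observability), `G = gcd(B₁, C₂)` with `B₁ = G B₁'`, `C₂ = G C₂'` and
`gcd(B₁', C₂') = 1`, then `gcd(C₂' B₂, B₁' C₁) = 1`. -/
theorem interconnection_coprimality {k : Type*} [Field k]
    (B₁ B₂ C₁ C₂ G B₁' C₂' : LaurentPolynomial k)
    (hInterface : IsCoprime B₂ C₁)
    (hObsB : IsCoprime B₁ B₂) (hObsC : IsCoprime C₁ C₂)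
    (hB₁ : B₁ = G * B₁') (hC₂ : C₂ = G * C₂')
    (hGgcd : ∀ x : LaurentPolynomial k, x ∣ B₁ → x ∣ C₂ → x ∣ G)
    (hcop : IsCoprime B₁' C₂') :
    IsCoprime (C₂' * B₂) (B₁' * C₁) := by
  subst hB₁ hC₂
  have h1 : IsCoprime C₂' C₁ := (hObsC.of_mul_right_right).symm
  have h2 : IsCoprime B₂ B₁' := hObsB.of_mul_left_right.symm
  exact (hcop.symm.mul_right h1).mul_left (h2.mul_right hInterface)
end
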